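/- arXiv:1912.01134 — 3 statements merged into one kernel-verified Lean document; each statement's English description precedes it below -/
import Mathlib

section
/- Let r ≥ 2 be a natural number and let 0 < k ≤ 1. If x ∈ ℝ^r satisfies ∑_{i=1}^r x_i = 0 and ∑_{i=1}^r x_i^2 ≤ k^2/(r(r−1)), then max_i |x_i| ≤ k/r. (Applied to x_i = p_i − 1/r, this shows the closed Euclidean ball of radius k/√(r(r−1)) centered at u_r within the hyperplane ∑_i p_i = 1 is contained in the polytope C_r(k/r) = {p ∈ S_{r−1} : M(p, u_r) ≤ k/r}, as asserted in Proposition 1(a).) -/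
/-- If `x ∈ ℝ^r` satisfies `∑ x i = 0` and `∑ x i ^ 2 ≤ k²/(r(r-1))` with
`0 < k ≤ 1`, then `max_i |x i| ≤ k/r` (the inscribed ball of radius
`k/√(r(r-1))` within the hyperplane is contained in the polytope `C_r(k/r)`). -/
theorem ball_subset_polytope (r : ℕ) (hr : 2 ≤ r) (k : ℝ) (hk0 : 0 < k) (hk1 : k ≤ 1)
    (x : Fin r → ℝ) (hsum : ∑ i, x i = 0)
    (hball : ∑ i, (x i) ^ 2 ≤ k ^ 2 / ((r : ℝ) * ((r : ℝ) - 1))) :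
    ∀ i, |x i| ≤ k / (r : ℝ) := by
  intro i
  have hr1 : (1:ℝ) ≤ (r:ℝ) - 1 := by
    have : (2:ℝ) ≤ (r:ℝ) := by exact_mod_cast hr
    linarith
  have hrpos : (0:ℝ) < (r:ℝ) := by linarith
  -- x i = - sum over others
  have hsplit : x i + ∑ j ∈ Finset.univ.erase i, x j = 0 := by
    rw [Finset.add_sum_erase _ _ (Finset.mem_univ i)]; exact hsum
  have hsq : (x i) ^ 2 = (∑ j ∈ Finset.univ.erase i, x j) ^ 2 := by
    have : x i = -(∑ j ∈ Finset.univ.erase i, x j) := by linarith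
    rw [this]; ring
  have hcard : (((Finset.univ.erase i).card : ℕ) : ℝ) = (r:ℝ) - 1 := by
    rw [Finset.card_erase_of_mem (Finset.mem_univ i)]
    simp [Finset.card_univ]
    have : 1 ≤ r := by omega
    push_cast [Nat.cast_sub this]
    ring
  have hCS : (x i) ^ 2 ≤ ((r:ℝ) - 1) * ∑ j ∈ Finset.univ.erase i, (x j) ^ 2 := by
    rw [hsq, ← hcard]
    exact sq_sum_le_card_mul_sum_sq
  have hsplit2 : ∑ j ∈ Finset.univ.erase i, (x j) ^ 2 = (∑ j, (x j)^2) - (x i)^2 := by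
    rw [← Finset.add_sum_erase _ _ (Finset.mem_univ i)]; ring
  have hStot : (x i)^2 + ((r:ℝ)-1) * (x i)^2 ≤ ((r:ℝ)-1) * ∑ j, (x j)^2 := by
    have := hCS
    rw [hsplit2] at this
    nlinarith
  have hS : (r:ℝ) * (x i)^2 ≤ ((r:ℝ)-1) * (k ^ 2 / ((r : ℝ) * ((r : ℝ) - 1))) := by
    have hmul : ((r:ℝ)-1) * ∑ j, (x j)^2 ≤ ((r:ℝ)-1) * (k ^ 2 / ((r : ℝ) * ((r : ℝ) - 1))) :=
      mul_le_mul_of_nonneg_left hball (by linarith)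
    nlinarith
  have key : (x i)^2 ≤ (k / (r:ℝ))^2 := by
    have h1 : ((r:ℝ)-1) * (k ^ 2 / ((r : ℝ) * ((r : ℝ) - 1))) = k^2 / (r:ℝ) := by
      field_simp
    rw [h1] at hS
    have h2 : (r:ℝ) * (k^2/(r:ℝ)) = k^2 := by field_simp
    rw [div_pow, le_div_iff₀ (by positivity)]
    nlinarith
  have h3 := Real.sqrt_le_sqrt key
  rw [Real.sqrt_sq_eq_abs, Real.sqrt_sq (by positivity)] at h3
  exact h3
end

section
/- (Proposition 1(b)) Let r ≥ 2 be a natural number and let 0 < d_0 < √(1 − 1/r). Define p* ∈ ℝ^r by p* = u_r + d_0·√(1 − 1/r)·(1, −1/(r−1), …, −1/(r−1)). Then p* minimizes the divergence J(u_r, p) = ∑_{i=1}^r (p_i − 1/r)·ln(p_i) over all p ∈ ℝ^r satisfying p_i > 0 for all i, ∑_{i=1}^r p_i = 1, and ∑_{i=1}^r (p_i − 1/r)^2 = d_0^2; that is, for every such p, J(u_r, p) ≥ J(u_r, p*). -/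
/-!
Let `φ x = (x - c) log x` with `c = 1/r`, and let `a > b` be the two values taken by `p*`.
Feasible vectors all have the same `∑ pᵢ` and `∑ (pᵢ - c)²`, hence the same `∑ T pᵢ` for every
quadratic `T`. Take `T` tangent to `φ` at `b` and meeting it at `a`: then
`∑ φ p*ᵢ = ∑ T p*ᵢ = ∑ T pᵢ ≤ ∑ φ pᵢ`, as long as `T ≤ φ` on `(0, a]`, which contains every
coordinate of a feasible `p` by Cauchy–Schwarz. For `T ≤ φ`, note that `(φ - T)'` is
`log x - c/x` plus an affine function, hence concave; it vanishes at `b` and, by Rolle, at some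
`ξ ∈ (b, a)`, so `φ - T` decreases on `(0, b]`, increases on `[b, ξ]`, decreases on `[ξ, a]`,
and vanishes at `b` and `a`.
-/

open Set Real Finset

theorem nonneg_Ioc_of_concaveOn_deriv {h ψ : ℝ → ℝ} {l a b : ℝ} (hlb : l < b) (hba : b < a)
    (hderiv : ∀ x ∈ Ioi l, HasDerivAt h (ψ x) x) (hψ : ConcaveOn ℝ (Ioi l) ψ)
    (hψb : ψ b = 0) (hb : h b = 0) (ha : h a = 0) : ∀ x ∈ Ioc l a, 0 ≤ h x := by
  have hcont : ContinuousOn h (Ioi l) := fun x hx => (hderiv x hx).continuousAt.continuousWithinAt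
  have hderivIcc : ∀ {u v}, l < u → ∀ y ∈ interior (Icc u v),
      HasDerivWithinAt h (ψ y) (interior (Icc u v)) y := fun hu y hy =>
    (hderiv y (hu.trans_le (interior_subset hy).1)).hasDerivWithinAt
  have mono : ∀ {u v}, l < u → (∀ y ∈ Ioo u v, 0 ≤ ψ y) → MonotoneOn h (Icc u v) :=
    fun hu hψ => monotoneOn_of_hasDerivWithinAt_nonneg (convex_Icc _ _)
      (hcont.mono fun y hy => hu.trans_le hy.1) (hderivIcc hu) (by simpa using hψ)
  have anti : ∀ {u v}, l < u → (∀ y ∈ Ioo u v, ψ y ≤ 0) → AntitoneOn h (Icc u v) :=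
    fun hu hψ => antitoneOn_of_hasDerivWithinAt_nonpos (convex_Icc _ _)
      (hcont.mono fun y hy => hu.trans_le hy.1) (hderivIcc hu) (by simpa using hψ)
  obtain ⟨ξ, ⟨hbξ, hξa⟩, hψξ⟩ : ∃ ξ ∈ Ioo b a, ψ ξ = 0 :=
    exists_hasDerivAt_eq_zero hba (hcont.mono fun x hx => hlb.trans_le hx.1) (hb.trans ha.symm)
      fun x hx => hderiv x (hlb.trans hx.1)
  have hbl : b ∈ Ioi l := hlb
  have hξl : ξ ∈ Ioi l := hlb.trans hbξ
  have hψ_left : ∀ y ∈ Ioi l, y ≤ b → ψ y ≤ 0 := fun y hy hyb => by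
    simpa [hψb] using hψ.left_le_of_le_right'' hy hξl hyb hbξ (hψb.trans hψξ.symm).le
  have hψ_mid : ∀ y ∈ Icc b ξ, 0 ≤ ψ y := fun y hy => by
    simpa [hψb, hψξ] using hψ.ge_on_segment hbl hξl (by rwa [segment_eq_Icc hbξ.le])
  have hψ_right : ∀ y, ξ ≤ y → ψ y ≤ 0 := fun y hy => by
    simpa [hψξ] using hψ.right_le_of_le_left'' hbl (hξl.trans_le hy) hbξ hy (hψξ.trans hψb.symm).le
  rintro x ⟨hlx, hxa⟩
  rcases le_total x b with hxb | hbx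
  · simpa [hb] using anti hlx (fun y hy => hψ_left y (hlx.trans hy.1) hy.2.le)
      ⟨le_rfl, hxb⟩ ⟨hxb, le_rfl⟩ hxb
  rcases le_total x ξ with hxξ | hξx
  · simpa [hb] using mono hlb (fun y hy => hψ_mid y (Ioo_subset_Icc_self hy))
      ⟨le_rfl, hbξ.le⟩ ⟨hbx, hxξ⟩ hbx
  · simpa [ha] using anti hξl (fun y hy => hψ_right y hy.1.le) ⟨hξx, hxa⟩ ⟨hξa.le, le_rfl⟩ hxa

theorem concaveOn_log_sub_div_add_linear {c : ℝ} (hc : 0 ≤ c) (m k : ℝ) :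
    ConcaveOn ℝ (Ioi 0) fun x => log x - c / x + (m * x + k) := by
  have hinv : ConcaveOn ℝ (Ioi 0) fun x : ℝ => -(c • x ^ (-1 : ℤ)) :=
    ((convexOn_zpow (-1)).smul hc).neg
  have hlin : ConcaveOn ℝ (Ioi 0) fun x : ℝ => m * x + k :=
    ((LinearMap.mul ℝ ℝ m).concaveOn (convex_Ioi 0)).add_const k
  refine ((strictConcaveOn_log_Ioi.concaveOn.add hinv).add hlin).congr fun x _ => ?_
  simp [div_eq_mul_inv, sub_eq_add_neg]

theorem quadratic_le_sub_mul_log {c a b μ : ℝ} (hc : 0 ≤ c) (hb : 0 < b) (hba : b < a)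
    (ha : (b - c) * log b + (log b + 1 - c / b) * (a - b) + μ * (a - b) ^ 2 = (a - c) * log a)
    {x : ℝ} (hx : 0 < x) (hxa : x ≤ a) :
    (b - c) * log b + (log b + 1 - c / b) * (x - b) + μ * (x - b) ^ 2 ≤ (x - c) * log x := by
  set L := log b + 1 - c / b
  have hderiv : ∀ y ∈ Ioi (0 : ℝ), HasDerivAt
      (fun y => (y - c) * log y - ((b - c) * log b + L * (y - b) + μ * (y - b) ^ 2))
      (log y - c / y + (-(2 * μ) * y + (1 - L + 2 * μ * b))) y := fun y hy => by
    have hy0 : y ≠ 0 := ne_of_gt hy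
    refine ((((hasDerivAt_id' y).sub_const c).mul (hasDerivAt_log hy0)).sub
      ((((hasDerivAt_id' y).sub_const b).const_mul L).const_add ((b - c) * log b) |>.add
        ((((hasDerivAt_id' y).sub_const b).pow 2).const_mul μ))).congr_deriv ?_
    field_simp
    ring
  simpa using nonneg_Ioc_of_concaveOn_deriv hb hba hderiv
    (concaveOn_log_sub_div_add_linear hc _ _) (by simp only [L]; field_simp; ring) (by ring)
    (by simp [ha]) x ⟨hx, hxa⟩

theorem card_mul_sq_le_of_sum_eq_zero {ι : Type*} [Fintype ι] [DecidableEq ι] {x : ι → ℝ}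
    (hx : ∑ j, x j = 0) (i : ι) :
    Fintype.card ι * x i ^ 2 ≤ (Fintype.card ι - 1) * ∑ j, x j ^ 2 := by
  have hcard : ((univ.erase i).card : ℝ) = Fintype.card ι - 1 := by
    rw [card_erase_of_mem (mem_univ i), card_univ, Nat.cast_pred (Fintype.card_pos_iff.2 ⟨i⟩)]
  have hrest : ∑ j ∈ univ.erase i, x j = -x i := by
    linarith [add_sum_erase univ x (mem_univ i)]
  have hrest_sq : ∑ j ∈ univ.erase i, x j ^ 2 = ∑ j, x j ^ 2 - x i ^ 2 := by
    linarith [add_sum_erase univ (fun j => x j ^ 2) (mem_univ i)]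
  have := sq_sum_le_card_mul_sum_sq (s := univ.erase i) (f := x)
  rw [hcard, hrest, hrest_sq, neg_sq] at this
  linarith

theorem abs_sub_inv_card_le {ι : Type*} [Fintype ι] {q : ι → ℝ} {d : ℝ} (hd : 0 ≤ d)
    (hsum : ∑ j, q j = 1) (hsq : ∑ j, (q j - 1 / Fintype.card ι) ^ 2 = d ^ 2) (i : ι) :
    |q i - 1 / Fintype.card ι| ≤ d * √(1 - 1 / Fintype.card ι) := by
  classical
  set n : ℝ := (Fintype.card ι : ℝ)
  have hn : 0 < n := Nat.cast_pos.mpr (Fintype.card_pos_iff.2 ⟨i⟩)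
  have hcentered : ∑ j, (q j - 1 / n) = 0 := by
    rw [sum_sub_distrib, hsum, sum_const, card_univ, nsmul_eq_mul]
    field_simp
    ring
  have := card_mul_sq_le_of_sum_eq_zero hcentered i
  rw [hsq] at this
  rw [← sqrt_sq hd, ← sqrt_mul (sq_nonneg d)]
  refine abs_le_sqrt ?_
  rw [show d ^ 2 * (1 - 1 / n) = (n - 1) * d ^ 2 / n by field_simp, le_div_iff₀' hn]
  exact this

theorem sum_quadratic_eq_of_moments {ι : Type*} [Fintype ι] {p q : ι → ℝ} {c : ℝ}
    (h1 : ∑ i, p i = ∑ i, q i) (h2 : ∑ i, (p i - c) ^ 2 = ∑ i, (q i - c) ^ 2)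
    (f : ℝ → ℝ) (A B C : ℝ) (hf : ∀ x, f x = A + B * (x - c) + C * (x - c) ^ 2) :
    ∑ i, f (p i) = ∑ i, f (q i) := by
  simp only [hf, sum_add_distrib, ← mul_sum, sum_sub_distrib, h1, h2]

theorem sum_ite_eq_add_mul {ι : Type*} [Fintype ι] [DecidableEq ι] (i₀ : ι) (x y : ℝ) :
    ∑ i, (if i = i₀ then x else y) = x + (Fintype.card ι - 1) * y := by
  rw [← add_sum_erase _ _ (mem_univ i₀), if_pos rfl,
    sum_congr rfl fun i hi => if_neg (ne_of_mem_erase hi), sum_const,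
    card_erase_of_mem (mem_univ i₀), card_univ, nsmul_eq_mul,
    Nat.cast_pred (Fintype.card_pos_iff.2 ⟨i₀⟩)]

theorem sum_sub_mul_log_le_of_moments {ι : Type*} [Fintype ι] {c a b : ℝ} (hc : 0 ≤ c)
    (hb : 0 < b) (hba : b < a) {p q : ι → ℝ} (hq : ∀ i, q i = a ∨ q i = b)
    (hpos : ∀ i, 0 < p i) (hpa : ∀ i, p i ≤ a) (h1 : ∑ i, q i = ∑ i, p i)
    (h2 : ∑ i, (q i - c) ^ 2 = ∑ i, (p i - c) ^ 2) :
    ∑ i, (q i - c) * log (q i) ≤ ∑ i, (p i - c) * log (p i) := by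
  set L := log b + 1 - c / b
  set μ := ((a - c) * log a - (b - c) * log b - L * (a - b)) / (a - b) ^ 2
  have hμ : (b - c) * log b + L * (a - b) + μ * (a - b) ^ 2 = (a - c) * log a := by
    rw [div_mul_cancel₀ _ (pow_ne_zero 2 (sub_pos.2 hba).ne')]
    ring
  set T : ℝ → ℝ := fun x => (b - c) * log b + L * (x - b) + μ * (x - b) ^ 2
  calc ∑ i, (q i - c) * log (q i) = ∑ i, T (q i) := by
        refine sum_congr rfl fun i _ => ?_
        rcases hq i with hi | hi <;> rw [hi]
        · exact hμ.symm
        · ring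
    _ = ∑ i, T (p i) :=
        sum_quadratic_eq_of_moments h1 h2 T (T c) (L + 2 * μ * (c - b)) μ fun x => by ring
    _ ≤ ∑ i, (p i - c) * log (p i) :=
        sum_le_sum fun i _ => quadratic_le_sub_mul_log hc hb hba hμ (hpos i) (hpa i)

theorem one_div_sub_mul_sqrt_div_pos {r d : ℝ} (hr : 1 < r) (hd : d < √(1 - 1 / r)) :
    0 < 1 / r - d * √(1 - 1 / r) / (r - 1) := by
  have hr0 : 0 < r := by linarith
  have hpos : 0 < 1 - 1 / r := by rw [sub_pos, div_lt_one hr0]; exact hr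
  have : d * √(1 - 1 / r) < 1 - 1 / r := by nlinarith [sq_sqrt hpos.le, sqrt_pos.2 hpos]
  rw [sub_pos, div_lt_iff₀ (sub_pos.2 hr)]
  calc _ < 1 - 1 / r := this
    _ = 1 / r * (r - 1) := by field_simp

/-- Proposition 1(b): the point `p* = u_r + d₀·√(1−1/r)·(1, −1/(r−1), …, −1/(r−1))`
minimizes the symmetrized Kullback–Leibler divergence
`J(u_r, p) = ∑ (p i − 1/r)·ln(p i)` over all strictly positive probability
vectors `p` at Euclidean distance `d₀` from `u_r`. -/
theorem prop1b_minimizer (r : ℕ) (hr : 2 ≤ r) (d₀ : ℝ)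
    (hd0 : 0 < d₀) (hd1 : d₀ < Real.sqrt (1 - 1 / (r : ℝ)))
    (pstar : Fin r → ℝ)
    (hp : ∀ i, pstar i =
      if i = ⟨0, by omega⟩ then 1 / (r : ℝ) + d₀ * Real.sqrt (1 - 1 / (r : ℝ))
      else 1 / (r : ℝ) - d₀ * Real.sqrt (1 - 1 / (r : ℝ)) / ((r : ℝ) - 1)) :
    ∀ p : Fin r → ℝ, (∀ i, 0 < p i) → (∑ i, p i = 1) →
      (∑ i, (p i - 1 / (r : ℝ)) ^ 2 = d₀ ^ 2) →
      ∑ i, (pstar i - 1 / (r : ℝ)) * Real.log (pstar i)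
        ≤ ∑ i, (p i - 1 / (r : ℝ)) * Real.log (p i) := by
  intro p hpos hsum hsq
  set c : ℝ := 1 / r
  set s := √(1 - c)
  set a := c + d₀ * s
  set b := c - d₀ * s / (r - 1)
  have hr1 : (0 : ℝ) < r - 1 := sub_pos.2 (Nat.one_lt_cast.2 (by omega))
  have hcr : c * r = 1 := by simp only [c]; field_simp
  have hs2 : s ^ 2 = 1 - c :=
    sq_sqrt (sub_nonneg.2 (div_le_one_of_le₀ (by linarith) (by positivity)))
  have hb : 0 < b := one_div_sub_mul_sqrt_div_pos (sub_pos.1 hr1) hd1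
  have hds : 0 < d₀ * s := mul_pos hd0 (hd0.trans hd1)
  have hba : b < a := by linarith [div_pos hds hr1]
  have hstar : ∀ f : ℝ → ℝ, ∑ i, f (pstar i) = f a + (r - 1) * f b := fun f => by
    simp_rw [hp, apply_ite f]
    rw [sum_ite_eq_add_mul, Fintype.card_fin]
  refine sum_sub_mul_log_le_of_moments (by positivity) hb hba (fun i => ?_) hpos (fun i => ?_)
    ?_ ?_
  · exact hp i ▸ ite_eq_or_eq _ _ _
  · have := abs_sub_inv_card_le hd0.le hsum (by rwa [Fintype.card_fin]) i
    rw [Fintype.card_fin] at this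
    linarith [le_abs_self (p i - c)]
  · refine ((hstar id).trans ?_).trans hsum.symm
    simp only [id, a, b]
    field_simp
    linear_combination hcr
  · rw [hstar fun x => (x - c) ^ 2, hsq]
    simp only [a, b]
    field_simp
    linear_combination d₀ ^ 2 * r * hs2 - d₀ ^ 2 * hcr
end

section
/- (DasGupta's formula) Let Φ denote the cumulative distribution function of the standard normal N(0,1). If (t_n)_{n≥2} is a sequence of reals satisfying Φ(t_n) = 1 − 1/n for each n ≥ 2, then t_n / √(2·ln(n)) → 1 as n → ∞; that is, Φ^{−1}(1 − 1/n) ~ √(2·ln(n)) as n → ∞. -/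
/-!
The standard Gaussian tail `Q s = P(X > s)` lies between `φ (s + 1)` (integrate `φ` over
`(s, s + 1]`, where it is at least `φ (s + 1)`) and `φ s / s` (bound `φ x` by `(x / s) φ x`, whose
integral over `(s, ∞)` is explicit). Taking logarithms, `s² ≤ -2 log Q s - log (2π) ≤ (s + 1)²`
for `s ≥ 1`, so `s = √(-2 log Q s) + O(1)`. As `Q (t n) = 1 / n` forces `t n → ∞`, this gives
`t n = √(2 log n) + O(1)`.
-/

open MeasureTheory ProbabilityTheory Filter Real Set Topology
open scoped NNReal

lemma tendsto_div_nhds_one_of_abs_sub_le {α : Type*} {l : Filter α} {x y : α → ℝ} {C : ℝ}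
    (hy : Tendsto y l atTop) (hxy : ∀ᶠ i in l, |x i - y i| ≤ C) :
    Tendsto (fun i => x i / y i) l (𝓝 1) := by
  have h := tendsto_bdd_div_atTop_nhds_zero (f := fun i => x i - y i)
    (hxy.mono fun _ hi => neg_le_of_abs_le hi) (hxy.mono fun _ hi => le_of_abs_le hi) hy
  rw [← add_zero (1 : ℝ)]
  refine (h.const_add 1).congr' ?_
  filter_upwards [hy.eventually_gt_atTop 0] with i hi
  field_simp
  ring

lemma gaussianPDFReal_zero_one (x : ℝ) :
    gaussianPDFReal 0 1 x = (√(2 * π))⁻¹ * exp (-x ^ 2 / 2) := by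
  simp [gaussianPDFReal]

lemma log_gaussianPDFReal_zero_one (x : ℝ) :
    log (gaussianPDFReal 0 1 x) = -(log (2 * π) + x ^ 2) / 2 := by
  rw [gaussianPDFReal_zero_one, log_mul (by positivity) (exp_pos _).ne', log_inv,
    log_sqrt (by positivity), log_exp]
  ring

lemma antitoneOn_gaussianPDFReal (μ : ℝ) (v : ℝ≥0) :
    AntitoneOn (gaussianPDFReal μ v) (Ici μ) := by
  intro x hx y _ hxy
  simp only [gaussianPDFReal]
  gcongr
  exact sub_nonneg.2 hx

lemma measureReal_gaussianReal_eq_integral (μ : ℝ) {v : ℝ≥0} (hv : v ≠ 0) (s : Set ℝ) :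
    (gaussianReal μ v).real s = ∫ x in s, gaussianPDFReal μ v x := by
  rw [measureReal_def, gaussianReal_apply_eq_integral μ hv,
    ENNReal.toReal_ofReal (integral_nonneg fun x => gaussianPDFReal_nonneg μ v x)]

lemma integrable_mul_exp_neg_sq_div_two :
    Integrable fun x : ℝ => x * exp (-x ^ 2 / 2) := by
  convert integrable_mul_exp_neg_mul_sq (b := 1 / 2) (by norm_num) using 4
  ring

lemma integral_Ioi_mul_exp_neg_sq_div_two (s : ℝ) :
    ∫ x in Ioi s, x * exp (-x ^ 2 / 2) = exp (-s ^ 2 / 2) := by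
  have hderiv (x : ℝ) : HasDerivAt (fun x => -exp (-x ^ 2 / 2)) (x * exp (-x ^ 2 / 2)) x := by
    have h : HasDerivAt (fun x : ℝ => -x ^ 2 / 2) (-x) x :=
      (hasDerivAt_pow 2 x).neg.div_const 2 |>.congr_deriv (by push_cast; ring)
    exact h.exp.neg.congr_deriv (by ring)
  have hlim : Tendsto (fun x : ℝ => -exp (-x ^ 2 / 2)) atTop (𝓝 0) := by
    have hexp : Tendsto (fun x : ℝ => -x ^ 2 / 2) atTop atBot := by
      simpa only [Function.comp_def, neg_div] using
        tendsto_neg_atTop_atBot.comp ((tendsto_pow_atTop two_ne_zero).atTop_div_const two_pos)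
    simpa using (tendsto_exp_atBot.comp hexp).neg
  rw [integral_Ioi_of_hasDerivAt_of_tendsto' (fun x _ => hderiv x)
    integrable_mul_exp_neg_sq_div_two.integrableOn hlim]
  ring

lemma measureReal_gaussianReal_Ioi_le {s : ℝ} (hs : 0 < s) :
    (gaussianReal 0 1).real (Ioi s) ≤ gaussianPDFReal 0 1 s / s := by
  rw [measureReal_gaussianReal_eq_integral 0 one_ne_zero]
  calc ∫ x in Ioi s, gaussianPDFReal 0 1 x
      ≤ ∫ x in Ioi s, (√(2 * π))⁻¹ / s * (x * exp (-x ^ 2 / 2)) := by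
        refine setIntegral_mono_on (integrable_gaussianPDFReal 0 1).integrableOn
          (integrable_mul_exp_neg_sq_div_two.integrableOn.const_mul _) measurableSet_Ioi
          fun x hx => ?_
        rw [gaussianPDFReal_zero_one, show (√(2 * π))⁻¹ / s * (x * exp (-x ^ 2 / 2))
          = (√(2 * π))⁻¹ * exp (-x ^ 2 / 2) * (x / s) by ring]
        exact le_mul_of_one_le_right (by positivity) ((one_le_div hs).2 (le_of_lt hx))
    _ = gaussianPDFReal 0 1 s / s := by
        rw [integral_const_mul, integral_Ioi_mul_exp_neg_sq_div_two, gaussianPDFReal_zero_one]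
        ring

lemma gaussianPDFReal_add_one_le_measureReal_gaussianReal_Ioi {s : ℝ} (hs : 0 ≤ s) :
    gaussianPDFReal 0 1 (s + 1) ≤ (gaussianReal 0 1).real (Ioi s) := calc
  gaussianPDFReal 0 1 (s + 1) = ∫ _ in Ioc s (s + 1), gaussianPDFReal 0 1 (s + 1) := by
      simp
  _ ≤ ∫ x in Ioc s (s + 1), gaussianPDFReal 0 1 x :=
      setIntegral_mono_on (integrableOn_const (by simp))
        (integrable_gaussianPDFReal 0 1).integrableOn measurableSet_Ioc fun x hx =>
          antitoneOn_gaussianPDFReal 0 1 (mem_Ici.2 (hs.trans hx.1.le))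
            (mem_Ici.2 (by linarith)) hx.2
  _ = (gaussianReal 0 1).real (Ioc s (s + 1)) :=
      (measureReal_gaussianReal_eq_integral 0 one_ne_zero _).symm
  _ ≤ (gaussianReal 0 1).real (Ioi s) := measureReal_mono Ioc_subset_Ioi_self

lemma measureReal_gaussianReal_Ioi_pos (s : ℝ) : 0 < (gaussianReal 0 1).real (Ioi s) := calc
  0 < gaussianPDFReal 0 1 (max s 0 + 1) := gaussianPDFReal_pos 0 1 _ one_ne_zero
  _ ≤ (gaussianReal 0 1).real (Ioi (max s 0)) :=
      gaussianPDFReal_add_one_le_measureReal_gaussianReal_Ioi (le_max_right s 0)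
  _ ≤ (gaussianReal 0 1).real (Ioi s) := measureReal_mono (Ioi_subset_Ioi (le_max_left s 0))

lemma neg_two_mul_log_measureReal_gaussianReal_Ioi_mem_Icc {s : ℝ} (hs : 1 ≤ s) :
    -2 * log ((gaussianReal 0 1).real (Ioi s)) ∈
      Icc (s ^ 2 + log (2 * π)) ((s + 1) ^ 2 + log (2 * π)) := by
  have hpos := measureReal_gaussianReal_Ioi_pos s
  have hupper : (gaussianReal 0 1).real (Ioi s) ≤ gaussianPDFReal 0 1 s :=
    (measureReal_gaussianReal_Ioi_le (by linarith)).trans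
      (div_le_self (gaussianPDFReal_nonneg 0 1 s) hs)
  have hlower := gaussianPDFReal_add_one_le_measureReal_gaussianReal_Ioi (by linarith : 0 ≤ s)
  have hlog_upper := log_le_log hpos hupper
  have hlog_lower := log_le_log (gaussianPDFReal_pos 0 1 _ one_ne_zero) hlower
  rw [log_gaussianPDFReal_zero_one] at hlog_upper hlog_lower
  exact ⟨by linarith, by linarith⟩

lemma abs_sub_sqrt_neg_two_mul_log_measureReal_gaussianReal_Ioi_le {s : ℝ} (hs : 1 ≤ s) :
    |s - √(-2 * log ((gaussianReal 0 1).real (Ioi s)))| ≤ 1 + √(log (2 * π)) := by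
  obtain ⟨hlow, hupp⟩ := neg_two_mul_log_measureReal_gaussianReal_Ioi_mem_Icc hs
  set u := -2 * log ((gaussianReal 0 1).real (Ioi s))
  have ha : 0 ≤ log (2 * π) := log_nonneg (by linarith [pi_gt_three])
  have hsq_a := sq_sqrt ha
  have h₁ : s ≤ √u := (le_sqrt (by linarith) (by nlinarith)).2 (by linarith)
  have h₂ : √u ≤ s + 1 + √(log (2 * π)) :=
    (sqrt_le_left (by positivity)).2 (by nlinarith [sqrt_nonneg (log (2 * π))])
  rw [abs_le]
  constructor <;> linarith

lemma tendsto_atTop_of_tendsto_measureReal_gaussianReal_Ioi {α : Type*} {l : Filter α}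
    {t : α → ℝ} (h : Tendsto (fun i => (gaussianReal 0 1).real (Ioi (t i))) l (𝓝 0)) :
    Tendsto t l atTop := by
  refine tendsto_atTop.2 fun M => ?_
  filter_upwards [h.eventually (gt_mem_nhds (measureReal_gaussianReal_Ioi_pos M))] with i hi
  by_contra! hlt
  exact (measureReal_mono (Ioi_subset_Ioi hlt.le)).not_gt hi

/-- DasGupta's formula: if `Φ(t_n) = 1 − 1/n` for each `n ≥ 2`, where `Φ` is
the standard normal cdf, then `t_n / √(2·ln n) → 1` as `n → ∞`; that is,
`Φ⁻¹(1 − 1/n) ~ √(2·ln n)`. -/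
theorem dasgupta_formula (Φ : ℝ → ℝ)
    (hΦ : ∀ t, Φ t = ((gaussianReal 0 1) (Set.Iic t)).toReal)
    (t : ℕ → ℝ) (ht : ∀ n : ℕ, 2 ≤ n → Φ (t n) = 1 - 1 / (n : ℝ)) :
    Tendsto (fun n : ℕ => t n / Real.sqrt (2 * Real.log (n : ℝ)))
      atTop (nhds 1) := by
  have htail : ∀ n : ℕ, 2 ≤ n → (gaussianReal 0 1).real (Ioi (t n)) = (n : ℝ)⁻¹ := by
    intro n hn
    rw [← compl_Iic, probReal_compl_eq_one_sub measurableSet_Iic, measureReal_def, ← hΦ,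
      ht n hn]
    ring
  have ht_top : Tendsto t atTop atTop := by
    refine tendsto_atTop_of_tendsto_measureReal_gaussianReal_Ioi
      (tendsto_inv_atTop_nhds_zero_nat.congr' ?_)
    filter_upwards [eventually_ge_atTop 2] with n hn using (htail n hn).symm
  have hsqrt_log : Tendsto (fun n : ℕ => √(2 * log n)) atTop atTop :=
    tendsto_sqrt_atTop.comp
      ((tendsto_log_atTop.comp tendsto_natCast_atTop_atTop).const_mul_atTop two_pos)
  refine tendsto_div_nhds_one_of_abs_sub_le (C := 1 + √(log (2 * π))) hsqrt_log ?_
  filter_upwards [eventually_ge_atTop 2, ht_top.eventually_ge_atTop 1] with n hn h1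
  have hlog_tail : -2 * log ((gaussianReal 0 1).real (Ioi (t n))) = 2 * log n := by
    rw [htail n hn, log_inv]
    ring
  simpa only [hlog_tail] using abs_sub_sqrt_neg_two_mul_log_measureReal_gaussianReal_Ioi_le h1
end
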